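/- The set of solitary pairs of G forms a single orbit under the action of the group generated by g₁ and g₂ on unordered pairs of vertices: every image of a solitary pair under an element of the group is a solitary pair, and for any two solitary pairs P and Q there exists σ in the group with σ(P) = Q (applying σ elementwise). -/

import Mathlib

/-!
Both generators preserve solitariness of a pair of vertices (a finite check on ordered pairs),
so the group they generate lies in the setwise stabiliser of `SolitaryPairs`. There are twelve
solitary pairs, and explicit words of length at most five in `g₁, g₂` carry `s((0,0),(2,2))` to
each of them; hence they form a single orbit.
-/

/-- The forbidden-edge graph `G` on vertex set `Fin 4 × Fin 3`. -/
def EdgeSet : Set (Sym2 (Fin 4 × Fin 3)) :=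
  {s((0, 0), (1, 0)), s((2, 0), (3, 0)), s((0, 1), (2, 1)),
   s((1, 1), (3, 1)), s((0, 2), (3, 2)), s((1, 2), (2, 2))}

/-- The pair `{(i,a),(j,b)}` (with `i ≠ j`, `a ≠ b`) is solitary if it is disjoint
from every (in fact the unique) edge of `G` joining column `i` to column `j`. -/
def Solitary (i j : Fin 4) (a b : Fin 3) : Prop :=
  i ≠ j ∧ a ≠ b ∧ ∀ c d : Fin 3, s((i, c), (j, d)) ∈ EdgeSet → a ≠ c ∧ b ≠ d

/-- The set of solitary pairs, as unordered pairs of vertices. -/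
def SolitaryPairs : Set (Sym2 (Fin 4 × Fin 3)) :=
  {p | ∃ (i j : Fin 4) (a b : Fin 3), p = s((i, a), (j, b)) ∧ Solitary i j a b}

/-- `g₁`: the product of the disjoint transpositions
`(0,0)↔(1,0)`, `(0,1)↔(1,2)`, `(0,2)↔(1,1)`, `(2,1)↔(2,2)`, `(3,1)↔(3,2)`;
it fixes `(2,0)` and `(3,0)`. -/
def g₁ : Equiv.Perm (Fin 4 × Fin 3) :=
  Equiv.swap (0, 0) (1, 0) * Equiv.swap (0, 1) (1, 2) * Equiv.swap (0, 2) (1, 1) *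
    Equiv.swap (2, 1) (2, 2) * Equiv.swap (3, 1) (3, 2)

/-- The 4-cycle `a → b → c → d → a`. -/
def cyc4 (a b c d : Fin 4 × Fin 3) : Equiv.Perm (Fin 4 × Fin 3) :=
  Equiv.swap a d * Equiv.swap a c * Equiv.swap a b

/-- `g₂`: the product of the disjoint 4-cycles
`(0,0)→(1,2)→(2,0)→(3,2)→(0,0)`, `(1,0)→(2,2)→(3,0)→(0,2)→(1,0)`,
`(0,1)→(1,1)→(2,1)→(3,1)→(0,1)`. -/
def g₂ : Equiv.Perm (Fin 4 × Fin 3) :=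
  cyc4 (0, 0) (1, 2) (2, 0) (3, 2) * cyc4 (1, 0) (2, 2) (3, 0) (0, 2) *
    cyc4 (0, 1) (1, 1) (2, 1) (3, 1)

namespace Sym2

variable {G α : Type*} [Monoid G] [MulAction G α]

instance : MulAction G (Sym2 α) where
  smul g := map (g • ·)
  one_smul := Sym2.ind fun a b => show s((1 : G) • a, (1 : G) • b) = s(a, b) by simp
  mul_smul g h := Sym2.ind fun a b =>
    show s((g * h) • a, (g * h) • b) = s(g • h • a, g • h • b) by simp only [mul_smul]

@[simp]
lemma smul_mk (g : G) (a b : α) : g • s(a, b) = s(g • a, g • b) := rfl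

end Sym2

theorem Subgroup.exists_smul_eq_of_forall_exists_smul_eq {G β : Type*} [Group G] [MulAction G β]
    (H : Subgroup G) {S : Set β} {b₀ : β} (hS : ∀ p ∈ S, ∃ g ∈ H, g • b₀ = p) :
    ∀ p ∈ S, ∀ q ∈ S, ∃ g ∈ H, g • p = q := by
  intro p hp q hq
  obtain ⟨g, hg, rfl⟩ := hS p hp
  obtain ⟨h, hh, rfl⟩ := hS q hq
  exact ⟨h * g⁻¹, mul_mem hh (inv_mem hg), by rw [mul_smul, inv_smul_smul]⟩

open scoped Pointwise

instance (p : Sym2 (Fin 4 × Fin 3)) : Decidable (p ∈ EdgeSet) := by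
  dsimp only [EdgeSet]; infer_instance

instance (i j : Fin 4) (a b : Fin 3) : Decidable (Solitary i j a b) := by
  dsimp only [Solitary]; infer_instance

lemma Solitary.symm {i j : Fin 4} {a b : Fin 3} (h : Solitary i j a b) : Solitary j i b a := by
  obtain ⟨hij, hab, hedge⟩ := h
  refine ⟨hij.symm, hab.symm, fun c d hcd => (hedge d c ?_).symm⟩
  rwa [Sym2.eq_swap]

lemma mk_mem_solitaryPairs_iff (x y : Fin 4 × Fin 3) :
    s(x, y) ∈ SolitaryPairs ↔ Solitary x.1 y.1 x.2 y.2 := by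
  refine ⟨?_, fun h => ⟨x.1, y.1, x.2, y.2, rfl, h⟩⟩
  rintro ⟨i, j, a, b, hxy, hs⟩
  rcases Sym2.eq_iff.1 hxy with ⟨rfl, rfl⟩ | ⟨rfl, rfl⟩
  exacts [hs, hs.symm]

lemma mem_stabilizer_solitaryPairs {g : Equiv.Perm (Fin 4 × Fin 3)}
    (hg : ∀ x y, Solitary (g x).1 (g y).1 (g x).2 (g y).2 ↔ Solitary x.1 y.1 x.2 y.2) :
    g ∈ MulAction.stabilizer (Equiv.Perm (Fin 4 × Fin 3)) SolitaryPairs :=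
  MulAction.mem_stabilizer_set.2 <| Sym2.ind fun x y => by
    simpa only [Sym2.smul_mk, Equiv.Perm.smul_def, mk_mem_solitaryPairs_iff] using hg x y

lemma closure_le_stabilizer_solitaryPairs :
    Subgroup.closure {g₁, g₂} ≤ MulAction.stabilizer (Equiv.Perm (Fin 4 × Fin 3)) SolitaryPairs := by
  refine (Subgroup.closure_le _).2 ?_
  rintro g (rfl | rfl) <;> exact mem_stabilizer_solitaryPairs (by decide)

lemma list_prod_map_mem_closure (w : List (Fin 2)) :
    (w.map ![g₁, g₂]).prod ∈ Subgroup.closure {g₁, g₂} :=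
  Subgroup.list_prod_mem (K := Subgroup.closure _) <| List.forall_mem_map.2 fun i _ =>
    Subgroup.subset_closure (by fin_cases i <;> simp)

def orbitWords : List (List (Fin 2)) :=
  [[], [0], [1], [1, 0], [0, 1], [1, 1], [0, 1, 0], [1, 0, 1], [0, 1, 1], [1, 1, 1], [1, 0, 1, 0],
    [1, 1, 0, 1, 0]]

lemma exists_orbitWord_smul_eq {x y : Fin 4 × Fin 3} (h : Solitary x.1 y.1 x.2 y.2) :
    ∃ w ∈ orbitWords,
      (w.map ![g₁, g₂]).prod • s(((0, 0) : Fin 4 × Fin 3), (2, 2)) = s(x, y) := by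
  revert x y; decide +kernel

lemma solitaryPairs_subset_orbit :
    ∀ p ∈ SolitaryPairs, ∃ σ ∈ Subgroup.closure {g₁, g₂},
      σ • s(((0, 0) : Fin 4 × Fin 3), (2, 2)) = p :=
  Sym2.ind fun x y hxy => by
    obtain ⟨w, -, hwxy⟩ := exists_orbitWord_smul_eq ((mk_mem_solitaryPairs_iff x y).1 hxy)
    exact ⟨_, list_prod_map_mem_closure w, hwxy⟩

theorem solitary_pairs_single_orbit :
    (∀ σ ∈ Subgroup.closure ({g₁, g₂} : Set (Equiv.Perm (Fin 4 × Fin 3))),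
      ∀ p ∈ SolitaryPairs, Sym2.map σ p ∈ SolitaryPairs) ∧
    (∀ p ∈ SolitaryPairs, ∀ q ∈ SolitaryPairs,
      ∃ σ ∈ Subgroup.closure ({g₁, g₂} : Set (Equiv.Perm (Fin 4 × Fin 3))),
        Sym2.map σ p = q) :=
  ⟨fun _ hσ p => (MulAction.mem_stabilizer_set.1 (closure_le_stabilizer_solitaryPairs hσ) p).2,
    Subgroup.exists_smul_eq_of_forall_exists_smul_eq _ solitaryPairs_subset_orbit⟩
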